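/- Let Γ = C_4 be the 4-cycle graph on vertices v_1, v_2, v_3, v_4 with edges e_1 = {v_1,v_2}, e_2 = {v_2,v_3}, e_3 = {v_3,v_4}, e_4 = {v_4,v_1}, and let b_Γ : 𝔽_2^4 × 𝔽_2^4 → 𝔽_2^4 be the associated 𝔽_2-bilinear map (sending a pair of adjacent basis vertices to the corresponding edge basis vector, and other basis pairs to 0). Then b_Γ does not have the common slot property. -/
import Mathlib

def CommonSlot {V W : Type*} (b : V → V → W) : Prop :=
  ∀ v u v' u', b v u = b v' u' → ∃ u'', b v u = b v u'' ∧ b v' u' = b v' u''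

/-- The bilinear map associated with the 4-cycle graph `C_4` on vertices
`v_1, v_2, v_3, v_4` (indexed `0,1,2,3`), with edges
`e_1 = {v_1,v_2}`, `e_2 = {v_2,v_3}`, `e_3 = {v_3,v_4}`, `e_4 = {v_4,v_1}`. -/
def bC4 (x y : Fin 4 → ZMod 2) : Fin 4 → ZMod 2 :=
  ![x 0 * y 1 + x 1 * y 0, x 1 * y 2 + x 2 * y 1,
    x 2 * y 3 + x 3 * y 2, x 3 * y 0 + x 0 * y 3]

theorem stmt_10 : ¬ CommonSlot bC4 := by
  intro h
  obtain ⟨w, h1, h2⟩ := h ![0,0,1,1] ![0,1,0,0] ![1,1,0,0] ![0,0,1,0] (by decide)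
  have e1 := congrFun h1 1
  have e2 := congrFun h1 3
  have e3 := congrFun h2 0
  simp [bC4] at e1 e2 e3
  rw [← e1, ← e2] at e3
  exact one_ne_zero (α := ZMod 2) (by simpa using e3.symm)
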